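/- arXiv:2005.09370 — 4 statements merged into one kernel-verified Lean document; each statement's English description precedes it below -/
import Mathlib

section
/- For n ≥ 3, there exists a bijection M from the set of lines of F_q^n to the set of hyperplanes of F_q^n such that l ⊆ M(l) for every line l. -/
open Module

section Aux

variable {K : Type*} [Field K]

/-- k-dim subspaces transported along a linear equivalence. -/
noncomputable def subEquivOfLinearEquiv {V W : Type*} [AddCommGroup V] [Module K V]
    [AddCommGroup W] [Module K W] (e : V ≃ₗ[K] W) (k : ℕ) :
    {p : Submodule K V // finrank K p = k} ≃ {p : Submodule K W // finrank K p = k} where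
  toFun p := ⟨p.1.map (e : V →ₗ[K] W), by rw [LinearEquiv.finrank_map_eq]; exact p.2⟩
  invFun p := ⟨p.1.map (e.symm : W →ₗ[K] V), by rw [LinearEquiv.finrank_map_eq]; exact p.2⟩
  left_inv p := Subtype.ext (by
    show Submodule.map _ (Submodule.map _ p.1) = p.1
    ext x; simp [Submodule.mem_map_equiv])
  right_inv p := Subtype.ext (by
    show Submodule.map _ (Submodule.map _ p.1) = p.1
    ext x; simp [Submodule.mem_map_equiv])

variable {V : Type*} [AddCommGroup V] [Module K V] [FiniteDimensional K V]

lemma finrank_dualAnnihilator' (W : Submodule K V) :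
    finrank K W.dualAnnihilator + finrank K W = finrank K V := by
  have h1 := W.finrank_quotient_add_finrank
  have h2 : finrank K (V ⧸ W) = finrank K W.dualAnnihilator :=
    (Subspace.quotEquivAnnihilator W).finrank_eq
  omega

/-- Hyperplanes correspond to lines of the dual. -/
noncomputable def hypEquivDualLines (m : ℕ) (hm : finrank K V = m) (hm1 : 1 ≤ m) :
    {p : Submodule K V // finrank K p = m - 1} ≃
      {p : Submodule K (Dual K V) // finrank K p = 1} where
  toFun H := ⟨H.1.dualAnnihilator, by
    have := finrank_dualAnnihilator' H.1; have := H.2; omega⟩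
  invFun L := ⟨L.1.dualCoannihilator, by
    have h := finrank_dualAnnihilator' L.1.dualCoannihilator
    have h2 : L.1.dualCoannihilator.dualAnnihilator = L.1 :=
      Subspace.dualCoannihilator_dualAnnihilator_eq
    rw [h2] at h
    have := L.2; omega⟩
  left_inv H := Subtype.ext Subspace.dualAnnihilator_dualCoannihilator_eq
  right_inv L := Subtype.ext Subspace.dualCoannihilator_dualAnnihilator_eq

/-- k-dim subspaces inside W correspond to k-dim subspaces of W. -/
noncomputable def subInEquiv (W : Submodule K V) (k : ℕ) :
    {p : Submodule K V // p ≤ W ∧ finrank K p = k} ≃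
      {p : Submodule K W // finrank K p = k} where
  toFun p := ⟨p.1.comap W.subtype, by
    have hle : p.1 ≤ W := p.2.1
    have h1 : (p.1.comap W.subtype).map W.subtype = p.1 := by
      rw [Submodule.map_comap_subtype]
      exact inf_eq_right.mpr hle
    have h2 := Submodule.finrank_map_subtype_eq W (p.1.comap W.subtype)
    rw [h1] at h2
    rw [← h2]; exact p.2.2⟩
  invFun q := ⟨q.1.map W.subtype, ⟨Submodule.map_subtype_le W q.1, by
    rw [Submodule.finrank_map_subtype_eq]; exact q.2⟩⟩
  left_inv p := Subtype.ext (by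
    show Submodule.map W.subtype (Submodule.comap W.subtype p.1) = p.1
    rw [Submodule.map_comap_subtype]
    exact inf_eq_right.mpr p.2.1)
  right_inv q := Subtype.ext (by
    show Submodule.comap W.subtype (Submodule.map W.subtype q.1) = q.1
    rw [Submodule.comap_map_eq, Submodule.ker_subtype, sup_bot_eq])

end Aux

/-- For `n ≥ 3`, there exists a bijection `M` from the lines of `F_q^n` to the
hyperplanes of `F_q^n` such that `l ⊆ M(l)` for every line `l`. -/
theorem exists_line_hyperplane_bijection {q n : ℕ} {F : Type*} [Field F] [Fintype F]
    (hq : Fintype.card F = q) (hn : 3 ≤ n) :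
    ∃ M : {l : Submodule F (Fin n → F) // finrank F l = 1} →
          {H : Submodule F (Fin n → F) // finrank F H = n - 1},
      Function.Bijective M ∧ ∀ l, l.1 ≤ (M l).1 := by
  classical
  have hVrank : finrank F (Fin n → F) = n := Module.finrank_fin_fun F
  have hWrank : finrank F (Fin (n-1) → F) = n - 1 := Module.finrank_fin_fun F
  -- finiteness
  haveI : Finite (Submodule F (Fin n → F)) :=
    Finite.of_injective (fun p : Submodule F (Fin n → F) => (p : Set (Fin n → F)))
      SetLike.coe_injective
  haveI : Finite (Submodule F (Fin (n-1) → F)) :=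
    Finite.of_injective (fun p : Submodule F (Fin (n-1) → F) => (p : Set (Fin (n-1) → F)))
      SetLike.coe_injective
  haveI fL : Fintype {l : Submodule F (Fin n → F) // finrank F l = 1} := Fintype.ofFinite _
  haveI fH : Fintype {H : Submodule F (Fin n → F) // finrank F H = n - 1} := Fintype.ofFinite _
  set d : ℕ := Nat.card {p : Submodule F (Fin (n-1) → F) // finrank F p = 1} with hd
  -- lines of any (n-1)-dimensional space number d
  have key : ∀ (W : Type _) (_ : AddCommGroup W), ∀ (_ : Module F W) (_ : FiniteDimensional F W),
      finrank F W = n - 1 → Nat.card {p : Submodule F W // finrank F p = 1} = d := by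
    intro W _ _ _ hW
    exact Nat.card_congr (subEquivOfLinearEquiv
      (LinearEquiv.ofFinrankEq W (Fin (n-1) → F) (by rw [hW, hWrank])) 1)
  -- d is positive
  have hdpos : 0 < d := by
    have hv : (fun _ => (1:F) : Fin (n-1) → F) ≠ 0 := by
      intro h
      have := congrFun h ⟨0, by omega⟩
      exact one_ne_zero this
    have : Nonempty {p : Submodule F (Fin (n-1) → F) // finrank F p = 1} :=
      ⟨⟨Submodule.span F {(fun _ => (1:F) : Fin (n-1) → F)}, finrank_span_singleton hv⟩⟩
    exact Nat.card_pos
  -- degree of a line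
  have degL : ∀ l : {l : Submodule F (Fin n → F) // finrank F l = 1},
      Nat.card {H : {H : Submodule F (Fin n → F) // finrank F H = n - 1} // l.1 ≤ H.1} = d := by
    intro l
    have hann : finrank F l.1.dualAnnihilator = n - 1 := by
      have := finrank_dualAnnihilator' l.1
      have := l.2
      omega
    have e1 : {H : {H : Submodule F (Fin n → F) // finrank F H = n - 1} // l.1 ≤ H.1} ≃
        {L : {p : Submodule F (Dual F (Fin n → F)) // finrank F p = 1} //
          L.1 ≤ l.1.dualAnnihilator} :=
      (hypEquivDualLines n hVrank (by omega)).subtypeEquiv fun H => by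
        show l.1 ≤ H.1 ↔ H.1.dualAnnihilator ≤ l.1.dualAnnihilator
        exact Subspace.dualAnnihilator_le_dualAnnihilator_iff.symm
    have e2 := Equiv.subtypeSubtypeEquivSubtypeInter
      (fun p : Submodule F (Dual F (Fin n → F)) => finrank F p = 1)
      (fun p => p ≤ l.1.dualAnnihilator)
    have e3 : {p : Submodule F (Dual F (Fin n → F)) // finrank F p = 1 ∧
        p ≤ l.1.dualAnnihilator} ≃
        {p : Submodule F (Dual F (Fin n → F)) // p ≤ l.1.dualAnnihilator ∧ finrank F p = 1} :=
      Equiv.subtypeEquivRight fun p => and_comm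
    rw [Nat.card_congr (((e1.trans e2).trans e3).trans (subInEquiv l.1.dualAnnihilator 1))]
    exact key ↥(l.1.dualAnnihilator) inferInstance inferInstance inferInstance hann
  -- degree of a hyperplane
  have degH : ∀ H : {H : Submodule F (Fin n → F) // finrank F H = n - 1},
      Nat.card {l : {l : Submodule F (Fin n → F) // finrank F l = 1} // l.1 ≤ H.1} = d := by
    intro H
    have e2 := Equiv.subtypeSubtypeEquivSubtypeInter
      (fun p : Submodule F (Fin n → F) => finrank F p = 1) (fun p => p ≤ H.1)
    have e3 : {p : Submodule F (Fin n → F) // finrank F p = 1 ∧ p ≤ H.1} ≃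
        {p : Submodule F (Fin n → F) // p ≤ H.1 ∧ finrank F p = 1} :=
      Equiv.subtypeEquivRight fun p => and_comm
    rw [Nat.card_congr ((e2.trans e3).trans (subInEquiv H.1 1))]
    exact key ↥(H.1) inferInstance inferInstance inferInstance H.2
  -- total cardinalities agree
  have hcards : Fintype.card {l : Submodule F (Fin n → F) // finrank F l = 1} =
      Fintype.card {H : Submodule F (Fin n → F) // finrank F H = n - 1} := by
    rw [← Nat.card_eq_fintype_card, ← Nat.card_eq_fintype_card]
    have b := Pi.basisFun F (Fin n)
    have e : {H : Submodule F (Fin n → F) // finrank F H = n - 1} ≃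
        {l : Submodule F (Fin n → F) // finrank F l = 1} :=
      (hypEquivDualLines n hVrank (by omega)).trans
        (subEquivOfLinearEquiv b.toDualEquiv.symm 1)
    rw [Nat.card_congr e]
  -- Hall's theorem setup
  set t : {l : Submodule F (Fin n → F) // finrank F l = 1} →
      Finset {H : Submodule F (Fin n → F) // finrank F H = n - 1} :=
    fun l => Finset.univ.filter fun H => l.1 ≤ H.1 with ht
  have hcard_t : ∀ l, (t l).card = d := by
    intro l
    rw [ht]
    rw [← Fintype.card_subtype]
    rw [← Nat.card_eq_fintype_card]
    exact degL l
  have hall : ∀ S : Finset {l : Submodule F (Fin n → F) // finrank F l = 1},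
      S.card ≤ (S.biUnion t).card := by
    intro S
    set B := S.biUnion t with hB
    have hmul : d * S.card ≤ d * B.card := by
      have step1 : ∑ l ∈ S, (t l).card = d * S.card := by
        rw [Finset.sum_congr rfl (fun l _ => hcard_t l), Finset.sum_const, smul_eq_mul,
          Nat.mul_comm]
      have step2 : ∀ l ∈ S, t l = B.filter fun H => l.1 ≤ H.1 := by
        intro l hl
        ext H
        simp only [ht, Finset.mem_filter, Finset.mem_univ, true_and, hB, Finset.mem_biUnion]
        constructor
        · intro h
          exact ⟨⟨l, hl, by simp [ht, h]⟩, h⟩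
        · exact fun h => h.2
      have step3 : ∑ l ∈ S, (t l).card = ∑ H ∈ B, (S.filter fun l => l.1 ≤ H.1).card := by
        calc ∑ l ∈ S, (t l).card
            = ∑ l ∈ S, ∑ H ∈ B, if l.1 ≤ H.1 then 1 else 0 := by
              refine Finset.sum_congr rfl fun l hl => ?_
              rw [step2 l hl, Finset.card_filter]
          _ = ∑ H ∈ B, ∑ l ∈ S, if l.1 ≤ H.1 then 1 else 0 := Finset.sum_comm
          _ = ∑ H ∈ B, (S.filter fun l => l.1 ≤ H.1).card := by
              refine Finset.sum_congr rfl fun H _ => ?_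
              rw [Finset.card_filter]
      have step4 : ∀ H ∈ B, (S.filter fun l => l.1 ≤ H.1).card ≤ d := by
        intro H _
        calc (S.filter fun l => l.1 ≤ H.1).card
            ≤ (Finset.univ.filter fun l => l.1 ≤ H.1).card :=
              Finset.card_le_card (Finset.filter_subset_filter _ (Finset.subset_univ S))
          _ = d := by
              rw [← Fintype.card_subtype, ← Nat.card_eq_fintype_card]
              exact degH H
      calc d * S.card = ∑ l ∈ S, (t l).card := step1.symm
        _ = ∑ H ∈ B, (S.filter fun l => l.1 ≤ H.1).card := step3
        _ ≤ ∑ H ∈ B, d := Finset.sum_le_sum step4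
        _ = d * B.card := by rw [Finset.sum_const, smul_eq_mul, Nat.mul_comm]
    exact Nat.le_of_mul_le_mul_left hmul hdpos
  obtain ⟨f, hinj, hf⟩ := (Finset.all_card_le_biUnion_card_iff_exists_injective t).mp hall
  refine ⟨f, ?_, fun l => ?_⟩
  · exact (Fintype.bijective_iff_injective_and_card f).mpr ⟨hinj, hcards⟩
  · have := hf l
    rw [ht] at this
    exact (Finset.mem_filter.mp this).2
end

section
/- Let C be a flag code of type (t_1,...,t_r) on F_q^n. Then C attains the maximum flag distance 2·(Σ_{t_i ≤ ⌊n/2⌋} t_i + Σ_{t_i > ⌊n/2⌋} (n - t_i)) if and only if all projection maps p_i are injective on C and every projected code C_i attains the maximum possible subspace distance (2t_i if 2t_i ≤ n, else 2(n - t_i)). -/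
open Module

/-- The subspace distance `d_S(U,V) = dim(U+V) - dim(U∩V)`. -/
noncomputable def sDist {F : Type*} [Field F] {n : ℕ} (U V : Submodule F (Fin n → F)) : ℕ :=
  finrank F ↥(U ⊔ V) - finrank F ↥(U ⊓ V)

lemma sDist_self {F : Type*} [Field F] {n : ℕ} (U : Submodule F (Fin n → F)) :
    sDist U U = 0 := by
  unfold sDist; rw [sup_idem, inf_idem, Nat.sub_self]

lemma sDist_le {F : Type*} [Field F] [Fintype F] {n m : ℕ}
    (U V : Submodule F (Fin n → F)) (hU : finrank F U = m) (hV : finrank F V = m) :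
    sDist U V ≤ 2 * (if m ≤ n / 2 then m else n - m) := by
  have hsum : finrank F ↥(U ⊔ V) + finrank F ↥(U ⊓ V) = m + m := by
    rw [Submodule.finrank_sup_add_finrank_inf_eq, hU, hV]
  have hle : finrank F ↥(U ⊔ V) ≤ n := by
    have := Submodule.finrank_le (U ⊔ V)
    simpa [finrank_fintype_fun_eq_card] using this
  unfold sDist
  split_ifs with h <;> omega

/-- A flag code `C` of type `(t_1,...,t_r)` on `F_q^n` attains the maximum
flag distance `2(Σ_{t_i ≤ ⌊n/2⌋} t_i + Σ_{t_i > ⌊n/2⌋} (n - t_i))` if and only if it is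
disjoint (all projections are injective on `C`) and every projected code attains the
maximum possible subspace distance for its dimension. -/
theorem optimum_distance_characterization {q n r : ℕ} {F : Type*} [Field F] [Fintype F]
    (hq : Fintype.card F = q)
    (t : Fin r → ℕ) (ht : StrictMono t) (ht0 : ∀ i, 0 < t i) (htn : ∀ i, t i < n)
    (C : Finset (Fin r → Submodule F (Fin n → F))) (hC : 1 < C.card)
    (hflag : ∀ Fl ∈ C, (∀ i, finrank F (Fl i) = t i) ∧ StrictMono Fl) :
    (∀ Fl ∈ C, ∀ Fl' ∈ C, Fl ≠ Fl' →
        (∑ i, sDist (Fl i) (Fl' i)) =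
          2 * ∑ i, (if t i ≤ n / 2 then t i else n - t i)) ↔
    ((∀ i, Set.InjOn (fun Fl => Fl i) (C : Set (Fin r → Submodule F (Fin n → F)))) ∧
      ∀ i, ∀ Fl ∈ C, ∀ Fl' ∈ C, Fl i ≠ Fl' i →
        sDist (Fl i) (Fl' i) = if 2 * t i ≤ n then 2 * t i else 2 * (n - t i)) := by
  have hiff : ∀ i : Fin r, (t i ≤ n / 2 ↔ 2 * t i ≤ n) := by
    intro i; omega
  have hbound : ∀ Fl ∈ C, ∀ Fl' ∈ C, ∀ i : Fin r,
      sDist (Fl i) (Fl' i) ≤ 2 * (if t i ≤ n / 2 then t i else n - t i) := by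
    intro Fl hFl Fl' hFl' i
    exact sDist_le _ _ ((hflag Fl hFl).1 i) ((hflag Fl' hFl').1 i)
  constructor
  · intro h
    constructor
    · intro j Fl hFl Fl' hFl' hj
      by_contra hne
      have heq := h Fl hFl Fl' hFl' hne
      have hlt : (∑ i, sDist (Fl i) (Fl' i)) <
          ∑ i, 2 * (if t i ≤ n / 2 then t i else n - t i) := by
        apply Finset.sum_lt_sum (fun i _ => hbound Fl hFl Fl' hFl' i)
        refine ⟨j, Finset.mem_univ j, ?_⟩
        have : sDist (Fl j) (Fl' j) = 0 := by
          simp only at hj; rw [hj]; exact sDist_self _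
        rw [this]
        have := ht0 j; have := htn j
        split_ifs <;> omega
      rw [heq, ← Finset.mul_sum] at hlt
      exact lt_irrefl _ hlt
    · intro i Fl hFl Fl' hFl' hne
      have hne' : Fl ≠ Fl' := fun h' => hne (by rw [h'])
      have heq := h Fl hFl Fl' hFl' hne'
      rw [Finset.mul_sum] at heq
      have hall := (Finset.sum_eq_sum_iff_of_le
        (fun i _ => hbound Fl hFl Fl' hFl' i)).mp heq i (Finset.mem_univ i)
      rw [hall]
      by_cases h2 : 2 * t i ≤ n
      · rw [if_pos ((hiff i).mpr h2), if_pos h2]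
      · rw [if_neg (fun h' => h2 ((hiff i).mp h')), if_neg h2]
  · rintro ⟨hinj, hmax⟩ Fl hFl Fl' hFl' hne
    rw [Finset.mul_sum]
    apply Finset.sum_congr rfl
    intro i _
    have hnei : Fl i ≠ Fl' i := fun h' => hne (hinj i hFl hFl' h')
    rw [hmax i Fl hFl Fl' hFl' hnei]
    by_cases h2 : 2 * t i ≤ n
    · rw [if_pos ((hiff i).mpr h2), if_pos h2]
    · rw [if_neg (fun h' => h2 ((hiff i).mp h')), if_neg h2]
end

section
/- Let k divide n and let C be an optimum distance flag code of type (t_1,...,t_r) on F_q^n with t_i = k for some i. Then |C| ≤ (q^n - 1)/(q^k - 1), with equality if and only if the i-projected code C_i is a k-spread of F_q^n. -/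
open Module

/-- If `k ∣ n` and `C` is an optimum distance flag code of type
`(t_1,...,t_r)` on `F_q^n` with `t_i = k` for some `i`, then `|C| ≤ (q^n-1)/(q^k-1)`, with
equality if and only if the `i`-projected code is a `k`-spread of `F_q^n`. -/
theorem optimum_distance_card_bound_spread {q n r k : ℕ} {F : Type*} [Field F] [Fintype F]
    [DecidableEq (Submodule F (Fin n → F))]
    (hq : Fintype.card F = q) (hdvd : k ∣ n)
    (t : Fin r → ℕ) (ht : StrictMono t) (ht0 : ∀ j, 0 < t j) (htn : ∀ j, t j < n)
    (i : Fin r) (hti : t i = k)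
    (C : Finset (Fin r → Submodule F (Fin n → F))) (hC : 1 < C.card)
    (hflag : ∀ Fl ∈ C, (∀ j, finrank F (Fl j) = t j) ∧ StrictMono Fl)
    (hopt : ∀ Fl ∈ C, ∀ Fl' ∈ C, Fl ≠ Fl' →
        (∑ j, sDist (Fl j) (Fl' j)) =
          2 * ∑ j, (if t j ≤ n / 2 then t j else n - t j)) :
    C.card ≤ (q ^ n - 1) / (q ^ k - 1) ∧
    (C.card = (q ^ n - 1) / (q ^ k - 1) ↔
      ∀ v : Fin n → F, v ≠ 0 →
        ∃! U, U ∈ C.image (fun Fl => Fl i) ∧ v ∈ U) := by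
  classical
  have hq2 : (2:ℕ) ≤ q := hq ▸ Fintype.one_lt_card
  have hk0 : 0 < k := hti ▸ ht0 i
  have hkn : k < n := hti ▸ htn i
  have h2k : 2 * k ≤ n := by
    obtain ⟨m, rfl⟩ := hdvd
    rcases Nat.lt_or_ge m 2 with hm | hm
    · interval_cases m <;> omega
    · calc 2 * k = k * 2 := by ring
        _ ≤ k * m := Nat.mul_le_mul_left k hm
  have hfinn : finrank F (Fin n → F) = n := Module.finrank_fin_fun F
  -- Step 1: trivial pairwise intersections at position i
  have hbot : ∀ Fl ∈ C, ∀ Fl' ∈ C, Fl ≠ Fl' → Fl i ⊓ Fl' i = ⊥ := by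
    intro Fl hFl Fl' hFl' hne
    have hsum := hopt Fl hFl Fl' hFl' hne
    rw [Finset.mul_sum] at hsum
    have hle : ∀ j ∈ Finset.univ, sDist (Fl j) (Fl' j)
        ≤ 2 * (if t j ≤ n / 2 then t j else n - t j) := by
      intro j _
      have hU : finrank F (Fl j) = t j := (hflag Fl hFl).1 j
      have hV : finrank F (Fl' j) = t j := (hflag Fl' hFl').1 j
      have hsp : finrank F ↥(Fl j ⊔ Fl' j) + finrank F ↥(Fl j ⊓ Fl' j)
          = t j + t j := by
        rw [Submodule.finrank_sup_add_finrank_inf_eq, hU, hV]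
      have hsn : finrank F ↥(Fl j ⊔ Fl' j) ≤ n := by
        have := Submodule.finrank_le (Fl j ⊔ Fl' j)
        rwa [hfinn] at this
      unfold sDist
      split <;> omega
    have heach := (Finset.sum_eq_sum_iff_of_le hle).mp hsum i (Finset.mem_univ i)
    have hU : finrank F (Fl i) = k := hti ▸ (hflag Fl hFl).1 i
    have hV : finrank F (Fl' i) = k := hti ▸ (hflag Fl' hFl').1 i
    have hsp : finrank F ↥(Fl i ⊔ Fl' i) + finrank F ↥(Fl i ⊓ Fl' i) = k + k := by
      rw [Submodule.finrank_sup_add_finrank_inf_eq, hU, hV]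
    have hcond : t i ≤ n / 2 := by
      rw [hti]; omega
    rw [if_pos hcond, hti] at heach
    unfold sDist at heach
    have : finrank F ↥(Fl i ⊓ Fl' i) = 0 := by omega
    exact (Submodule.finrank_eq_zero).mp this
  -- the projected code
  set S : Finset (Submodule F (Fin n → F)) := C.image (fun Fl => Fl i) with hS
  have hdimS : ∀ U ∈ S, finrank F U = k := by
    intro U hU
    obtain ⟨Fl, hFl, rfl⟩ := Finset.mem_image.mp hU
    exact hti ▸ (hflag Fl hFl).1 i
  have hdisjS : ∀ U ∈ S, ∀ V ∈ S, U ≠ V → U ⊓ V = ⊥ := by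
    intro U hU V hV hUV
    obtain ⟨Fl, hFl, rfl⟩ := Finset.mem_image.mp hU
    obtain ⟨Fl', hFl', rfl⟩ := Finset.mem_image.mp hV
    exact hbot Fl hFl Fl' hFl' (fun h => hUV (by rw [h]))
  have hcardS : S.card = C.card := by
    apply Finset.card_image_of_injOn
    intro Fl hFl Fl' hFl' heq
    by_contra hne
    have heq' : Fl i = Fl' i := heq
    have hb := hbot Fl hFl Fl' hFl' hne
    have hU : finrank F (Fl i) = k := hti ▸ (hflag Fl hFl).1 i
    rw [heq', inf_idem] at hb
    rw [heq', hb, finrank_bot] at hU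
    omega
  -- count nonzero vectors
  set f : Submodule F (Fin n → F) → Finset (Fin n → F) :=
    fun U => (Finset.univ.filter (fun v => v ∈ U)).erase 0 with hf
  have hcardf : ∀ U ∈ S, (f U).card = q ^ k - 1 := by
    intro U hU
    have h0 : (0 : Fin n → F) ∈ Finset.univ.filter (fun v => v ∈ U) := by
      simp [U.zero_mem]
    rw [hf]
    simp only [Finset.card_erase_of_mem h0]
    have : (Finset.univ.filter (fun v => v ∈ U)).card = Fintype.card U := by
      rw [Fintype.card_subtype]
    rw [this, card_eq_pow_finrank (K := F), hq, hdimS U hU]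
  have hmemf : ∀ U v, v ∈ f U ↔ v ≠ 0 ∧ v ∈ U := by
    intro U v
    simp [hf, and_comm]
  have hdisjf : ∀ U ∈ S, ∀ V ∈ S, U ≠ V → Disjoint (f U) (f V) := by
    intro U hU V hV hUV
    rw [Finset.disjoint_left]
    intro v hvU hvV
    have h1 := (hmemf U v).mp hvU
    have h2 := (hmemf V v).mp hvV
    have : v ∈ U ⊓ V := ⟨h1.2, h2.2⟩
    rw [hdisjS U hU V hV hUV] at this
    exact h1.1 (by simpa using this)
  set T : Finset (Fin n → F) := S.biUnion f with hT
  have hTcard : T.card = S.card * (q ^ k - 1) := by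
    rw [hT, Finset.card_biUnion hdisjf, Finset.sum_congr rfl hcardf,
      Finset.sum_const, smul_eq_mul]
  have hE : (Finset.univ.erase (0 : Fin n → F)).card = q ^ n - 1 := by
    rw [Finset.card_erase_of_mem (Finset.mem_univ _), Finset.card_univ,
      Fintype.card_fun, hq, Fintype.card_fin]
  have hTsub : T ⊆ Finset.univ.erase (0 : Fin n → F) := by
    intro v hv
    obtain ⟨U, hU, hvU⟩ := Finset.mem_biUnion.mp hv
    exact Finset.mem_erase.mpr ⟨((hmemf U v).mp hvU).1, Finset.mem_univ v⟩
  have hqk1 : 0 < q ^ k - 1 := by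
    have : 2 ≤ q ^ k := le_trans hq2 (Nat.le_self_pow (by omega) q)
    omega
  have hdvd2 : q ^ k - 1 ∣ q ^ n - 1 := by
    obtain ⟨m, hm⟩ := hdvd
    have := Nat.sub_dvd_pow_sub_pow (q ^ k) 1 m
    rwa [one_pow, ← pow_mul, ← hm] at this
  have hbound : S.card * (q ^ k - 1) ≤ q ^ n - 1 := by
    rw [← hTcard, ← hE]
    exact Finset.card_le_card hTsub
  have hmain : C.card ≤ (q ^ n - 1) / (q ^ k - 1) := by
    rw [← hcardS, Nat.le_div_iff_mul_le hqk1]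
    exact hbound
  refine ⟨hmain, ?_⟩
  -- uniqueness part holds unconditionally
  have huniq : ∀ v : Fin n → F, v ≠ 0 → ∀ U, (U ∈ S ∧ v ∈ U) →
      ∀ V, (V ∈ S ∧ v ∈ V) → U = V := by
    intro v hv U hU V hV
    by_contra hUV
    have : v ∈ U ⊓ V := ⟨hU.2, hV.2⟩
    rw [hdisjS U hU.1 V hV.1 hUV] at this
    exact hv (by simpa using this)
  constructor
  · intro hcard v hv
    -- equality of cards forces T = univ.erase 0
    have hSc : S.card * (q ^ k - 1) = q ^ n - 1 := by
      rw [hcardS, hcard, Nat.div_mul_cancel hdvd2]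
    have hTeq : T = Finset.univ.erase (0 : Fin n → F) :=
      Finset.eq_of_subset_of_card_le hTsub (by rw [hTcard, hSc, hE])
    have hvT : v ∈ T := by
      rw [hTeq]; exact Finset.mem_erase.mpr ⟨hv, Finset.mem_univ v⟩
    obtain ⟨U, hU, hvU⟩ := Finset.mem_biUnion.mp hvT
    exact ⟨U, ⟨hU, ((hmemf U v).mp hvU).2⟩, fun V hV => huniq v hv V hV U ⟨hU, ((hmemf U v).mp hvU).2⟩⟩
  · intro hcov
    -- coverage forces T = univ.erase 0, hence card equality
    have hTeq : T = Finset.univ.erase (0 : Fin n → F) := by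
      apply Finset.Subset.antisymm hTsub
      intro v hv
      obtain ⟨hv0, _⟩ := Finset.mem_erase.mp hv
      obtain ⟨U, ⟨hU, hvU⟩, _⟩ := hcov v hv0
      exact Finset.mem_biUnion.mpr ⟨U, hU, (hmemf U v).mpr ⟨hv0, hvU⟩⟩
    have hSc : S.card * (q ^ k - 1) = q ^ n - 1 := by
      rw [← hTcard, hTeq, hE]
    rw [← hcardS, ← hSc, Nat.mul_div_cancel _ hqk1]
end

section
/- Let C be an optimum distance flag code of type (t_1,...,t_r) on F_q^n such that t_i = k divides n and the projected code C_i is a k-spread. Then every t_j satisfies t_j ≤ k or t_j ≥ n - k. -/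
open Module

section aux
variable {F V : Type*} [Field F] [Fintype F] [AddCommGroup V] [Module F V] [FiniteDimensional F V]

lemma partial_spread_card_le (S : Finset (Submodule F V)) (m : ℕ)
    (hdim : ∀ U ∈ S, finrank F U = m)
    (hdisj : ∀ U ∈ S, ∀ U' ∈ S, U ≠ U' → U ⊓ U' = ⊥) :
    S.card * (Fintype.card F ^ m - 1) ≤ Fintype.card F ^ (finrank F V) - 1 := by
  have : Finite V := Module.finite_of_finite F
  have : Fintype V := Fintype.ofFinite V
  classical
  set A : Submodule F V → Finset V := fun U => (U : Set V).toFinset.erase 0 with hA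
  have hcard : ∀ U ∈ S, (A U).card = Fintype.card F ^ m - 1 := by
    intro U hU
    have h0 : (0 : V) ∈ (U : Set V).toFinset := by simp
    rw [hA, Finset.card_erase_of_mem h0, Set.toFinset_card]
    have : Fintype.card (U : Set V) = Fintype.card U := Fintype.card_congr (Equiv.refl _)
    rw [this, card_eq_pow_finrank (K := F), hdim U hU]
  have hdisjA : ∀ U ∈ S, ∀ U' ∈ S, U ≠ U' → Disjoint (A U) (A U') := by
    intro U hU U' hU' hne
    rw [Finset.disjoint_left]
    intro v hv hv'
    simp only [hA, Finset.mem_erase, Set.mem_toFinset, SetLike.mem_coe] at hv hv'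
    have : v ∈ U ⊓ U' := ⟨hv.2, hv'.2⟩
    rw [hdisj U hU U' hU' hne] at this
    exact hv.1 this
  have hsub : S.biUnion A ⊆ Finset.univ.erase 0 := by
    intro v hv
    simp only [Finset.mem_biUnion] at hv
    obtain ⟨U, hU, hvU⟩ := hv
    simp only [hA, Finset.mem_erase, Set.mem_toFinset] at hvU
    exact Finset.mem_erase.2 ⟨hvU.1, Finset.mem_univ v⟩
  have := Finset.card_le_card hsub
  rw [Finset.card_biUnion hdisjA] at this
  rw [Finset.sum_congr rfl hcard, Finset.sum_const, smul_eq_mul] at this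
  rwa [Finset.card_erase_of_mem (Finset.mem_univ 0), Finset.card_univ,
    card_eq_pow_finrank (K := F) (V := V)] at this

lemma spread_card_ge (S : Finset (Submodule F V)) (m : ℕ)
    (hdim : ∀ U ∈ S, finrank F U = m)
    (hcover : ∀ v : V, v ≠ 0 → ∃ U ∈ S, v ∈ U) :
    Fintype.card F ^ (finrank F V) - 1 ≤ S.card * (Fintype.card F ^ m - 1) := by
  have : Finite V := Module.finite_of_finite F
  have : Fintype V := Fintype.ofFinite V
  classical
  set A : Submodule F V → Finset V := fun U => (U : Set V).toFinset.erase 0 with hA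
  have hcard : ∀ U ∈ S, (A U).card = Fintype.card F ^ m - 1 := by
    intro U hU
    have h0 : (0 : V) ∈ (U : Set V).toFinset := by simp
    rw [hA, Finset.card_erase_of_mem h0, Set.toFinset_card]
    have : Fintype.card (U : Set V) = Fintype.card U := Fintype.card_congr (Equiv.refl _)
    rw [this, card_eq_pow_finrank (K := F), hdim U hU]
  have hsub : Finset.univ.erase 0 ⊆ S.biUnion A := by
    intro v hv
    have hv0 : v ≠ 0 := (Finset.mem_erase.1 hv).1
    obtain ⟨U, hU, hvU⟩ := hcover v hv0
    exact Finset.mem_biUnion.2 ⟨U, hU, by simp [hA, hv0, hvU]⟩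
  calc Fintype.card F ^ finrank F V - 1 = (Finset.univ.erase (0:V)).card := by
        rw [Finset.card_erase_of_mem (Finset.mem_univ 0), Finset.card_univ,
          card_eq_pow_finrank (K := F) (V := V)]
    _ ≤ (S.biUnion A).card := Finset.card_le_card hsub
    _ ≤ ∑ U ∈ S, (A U).card := Finset.card_biUnion_le
    _ = S.card * (Fintype.card F ^ m - 1) := by
        rw [Finset.sum_congr rfl hcard, Finset.sum_const, smul_eq_mul]

end aux


section dist
variable {F : Type*} [Field F] {n : ℕ} (U V : Submodule F (Fin n → F))

lemma sDist_facts {m : ℕ} (hU : finrank F U = m) (hV : finrank F V = m) :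
    finrank F ↥(U ⊔ V) + finrank F ↥(U ⊓ V) = 2 * m ∧
    finrank F ↥(U ⊔ V) ≤ n ∧ finrank F ↥(U ⊓ V) ≤ m := by
  refine ⟨?_, ?_, ?_⟩
  · rw [Submodule.finrank_sup_add_finrank_inf_eq, hU, hV]; ring
  · exact (Submodule.finrank_le _).trans (le_of_eq (Module.finrank_fin_fun F))
  · rw [← hU]; exact Submodule.finrank_mono inf_le_left

end dist


/-- If `C` is an optimum distance flag code of type `(t_1,...,t_r)` on
`F_q^n` such that `t_i = k` divides `n` and the `i`-projected code is a `k`-spread, then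
every dimension `t_j` satisfies `t_j ≤ k` or `t_j ≥ n - k`. -/
theorem admissible_type_vector {q n r k : ℕ} {F : Type*} [Field F] [Fintype F]
    [DecidableEq (Submodule F (Fin n → F))]
    (hq : Fintype.card F = q) (hdvd : k ∣ n)
    (t : Fin r → ℕ) (ht : StrictMono t) (ht0 : ∀ j, 0 < t j) (htn : ∀ j, t j < n)
    (i : Fin r) (hti : t i = k)
    (C : Finset (Fin r → Submodule F (Fin n → F))) (hC : C.Nonempty)
    (hflag : ∀ Fl ∈ C, (∀ j, finrank F (Fl j) = t j) ∧ StrictMono Fl)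
    (hopt : ∀ Fl ∈ C, ∀ Fl' ∈ C, Fl ≠ Fl' →
        (∑ j, sDist (Fl j) (Fl' j)) =
          2 * ∑ j, (if t j ≤ n / 2 then t j else n - t j))
    (hspread : ∀ v : Fin n → F, v ≠ 0 →
        ∃! U, U ∈ C.image (fun Fl => Fl i) ∧ v ∈ U) :
    ∀ j, t j ≤ k ∨ n - k ≤ t j := by
  classical
  intro j
  by_contra hcon
  push_neg at hcon
  obtain ⟨hjk, hjnk⟩ := hcon
  have hq2 : 1 < q := hq ▸ Fintype.one_lt_card
  have hkpos : 0 < k := hti ▸ ht0 i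
  have hkn : k < n := hti ▸ htn i
  have hfinn : finrank F (Fin n → F) = n := Module.finrank_fin_fun F
  set M : Fin r → ℕ := fun l => if t l ≤ n / 2 then t l else n - t l with hM
  -- per-coordinate maximality of distances
  have key : ∀ Fl ∈ C, ∀ Fl' ∈ C, Fl ≠ Fl' → ∀ l, sDist (Fl l) (Fl' l) = 2 * M l := by
    intro Fl hFl Fl' hFl' hne
    have hle : ∀ l ∈ Finset.univ, sDist (Fl l) (Fl' l) ≤ 2 * M l := by
      intro l _
      obtain ⟨h1, h2, h3⟩ := sDist_facts (Fl l) (Fl' l) ((hflag Fl hFl).1 l) ((hflag Fl' hFl').1 l)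
      have htl := htn l
      unfold sDist
      simp only [hM]
      split_ifs with h <;> omega
    have hsum : ∑ l, sDist (Fl l) (Fl' l) = ∑ l, 2 * M l := by
      rw [hopt Fl hFl Fl' hFl' hne, Finset.mul_sum]
    intro l
    exact (Finset.sum_eq_sum_iff_of_le hle).1 hsum l (Finset.mem_univ l)
  have hMpos : ∀ l, 0 < M l := by
    intro l
    have := ht0 l; have := htn l
    simp only [hM]; split_ifs <;> omega
  -- injectivity of every projection
  have hinj : ∀ l : Fin r, Set.InjOn (fun Fl : Fin r → Submodule F (Fin n → F) => Fl l) C := by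
    intro l Fl hFl Fl' hFl' heq
    by_contra hne
    have hk := key Fl hFl Fl' hFl' hne l
    have h0 : sDist (Fl l) (Fl' l) = 0 := by
      unfold sDist
      simp only at heq
      rw [heq, sup_idem, inf_idem, Nat.sub_self]
    have := hMpos l
    omega
  -- spread lower bound
  set Si := C.image (fun Fl => Fl i) with hSi
  have hSidim : ∀ U ∈ Si, finrank F U = k := by
    intro U hU
    obtain ⟨Fl, hFl, rfl⟩ := Finset.mem_image.1 hU
    rw [(hflag Fl hFl).1 i, hti]
  have hScov : ∀ v : Fin n → F, v ≠ 0 → ∃ U ∈ Si, v ∈ U := by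
    intro v hv
    obtain ⟨U, ⟨hU, hvU⟩, _⟩ := hspread v hv
    exact ⟨U, hU, hvU⟩
  have hlow : q ^ n - 1 ≤ C.card * (q ^ k - 1) := by
    have h := spread_card_ge Si k hSidim hScov
    rw [hfinn, hq] at h
    exact h.trans (Nat.mul_le_mul_right _ Finset.card_image_le)
  have hCpos : 0 < C.card := hC.card_pos
  have hqkpos : 0 < q ^ k := pow_pos (by omega) _
  by_cases hhalf : t j ≤ n / 2
  · -- the projected code at j is a partial spread of dimension t j
    set Sj := C.image (fun Fl => Fl j) with hSj
    have hSjdim : ∀ U ∈ Sj, finrank F U = t j := by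
      intro U hU
      obtain ⟨Fl, hFl, rfl⟩ := Finset.mem_image.1 hU
      exact (hflag Fl hFl).1 j
    have hSjdisj : ∀ U ∈ Sj, ∀ U' ∈ Sj, U ≠ U' → U ⊓ U' = ⊥ := by
      intro U hU U' hU' hne
      obtain ⟨Fl, hFl, rfl⟩ := Finset.mem_image.1 hU
      obtain ⟨Fl', hFl', rfl⟩ := Finset.mem_image.1 hU'
      have hne' : Fl ≠ Fl' := fun h => hne (by rw [h])
      have hk := key Fl hFl Fl' hFl' hne' j
      obtain ⟨h1, h2, h3⟩ := sDist_facts (Fl j) (Fl' j) ((hflag Fl hFl).1 j) ((hflag Fl' hFl').1 j)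
      unfold sDist at hk
      simp only [hM, if_pos hhalf] at hk
      have h0 : finrank F ↥(Fl j ⊓ Fl' j) = 0 := by omega
      exact Submodule.finrank_eq_zero.1 h0
    have hcard : Sj.card = C.card := Finset.card_image_of_injOn (hinj j)
    have hup : C.card * (q ^ t j - 1) ≤ q ^ n - 1 := by
      have h := partial_spread_card_le Sj (t j) hSjdim hSjdisj
      rwa [hfinn, hcard, hq] at h
    have hpow : q ^ k < q ^ t j := Nat.pow_lt_pow_right hq2 hjk
    have hle : q ^ t j - 1 ≤ q ^ k - 1 :=
      Nat.le_of_mul_le_mul_left (hup.trans hlow) hCpos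
    omega
  · -- dual annihilators form a partial spread of dimension n - t j
    have hjn2 : n < 2 * t j := by omega
    have hsup : ∀ Fl ∈ C, ∀ Fl' ∈ C, Fl ≠ Fl' → Fl j ⊔ Fl' j = ⊤ := by
      intro Fl hFl Fl' hFl' hne
      have hk := key Fl hFl Fl' hFl' hne j
      obtain ⟨h1, h2, h3⟩ := sDist_facts (Fl j) (Fl' j) ((hflag Fl hFl).1 j) ((hflag Fl' hFl').1 j)
      unfold sDist at hk
      simp only [hM, if_neg hhalf] at hk
      have htj := htn j
      have h4 : finrank F ↥(Fl j ⊔ Fl' j) = n := by omega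
      exact Submodule.eq_top_of_finrank_eq (by rw [h4, hfinn])
    have hanndim : ∀ Fl ∈ C, finrank F (Fl j).dualAnnihilator = n - t j := by
      intro Fl hFl
      have e := Subspace.quotEquivAnnihilator (Fl j)
      have h1 := Submodule.finrank_quotient_add_finrank (Fl j)
      rw [hfinn, (hflag Fl hFl).1 j] at h1
      rw [← e.finrank_eq]
      omega
    set SD := C.image (fun Fl => (Fl j).dualAnnihilator) with hSD
    have hSDdim : ∀ U ∈ SD, finrank F U = n - t j := by
      intro U hU
      obtain ⟨Fl, hFl, rfl⟩ := Finset.mem_image.1 hU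
      exact hanndim Fl hFl
    have hSDdisj : ∀ U ∈ SD, ∀ U' ∈ SD, U ≠ U' → U ⊓ U' = ⊥ := by
      intro U hU U' hU' hne
      obtain ⟨Fl, hFl, rfl⟩ := Finset.mem_image.1 hU
      obtain ⟨Fl', hFl', rfl⟩ := Finset.mem_image.1 hU'
      have hne' : Fl ≠ Fl' := fun h => hne (by rw [h])
      rw [← Submodule.dualAnnihilator_sup_eq, hsup Fl hFl Fl' hFl' hne',
        Submodule.dualAnnihilator_top]
    have hSDinj : Set.InjOn (fun Fl : Fin r → Submodule F (Fin n → F) =>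
        (Fl j).dualAnnihilator) C := by
      intro Fl hFl Fl' hFl' heq
      by_contra hne
      have h1 : (Fl j).dualAnnihilator ⊓ (Fl' j).dualAnnihilator = ⊥ := by
        rw [← Submodule.dualAnnihilator_sup_eq, hsup Fl hFl Fl' hFl' hne,
          Submodule.dualAnnihilator_top]
      simp only at heq
      rw [heq, inf_idem] at h1
      have h2 := hanndim Fl' hFl'
      rw [h1] at h2
      simp only [finrank_bot] at h2
      have := htn j
      omega
    have hcard : SD.card = C.card := Finset.card_image_of_injOn hSDinj
    have hdualrank : finrank F (Module.Dual F (Fin n → F)) = n := by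
      rw [Subspace.dual_finrank_eq, hfinn]
    have hup : C.card * (q ^ (n - t j) - 1) ≤ q ^ n - 1 := by
      have h := partial_spread_card_le SD (n - t j) hSDdim hSDdisj
      rwa [hdualrank, hcard, hq] at h
    have hpow2 : q ^ k < q ^ (n - t j) := Nat.pow_lt_pow_right hq2 (by omega)
    have hle : q ^ (n - t j) - 1 ≤ q ^ k - 1 :=
      Nat.le_of_mul_le_mul_left (hup.trans hlow) hCpos
    omega
end
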